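/- arXiv:1412.4715 — 5 statements merged into one kernel-verified Lean document; each statement's English description precedes it below -/
import Mathlib

section
/- Let γ : ℝ → ℝᴺ be a smooth constant-speed curve (|γ'| ≡ M) and define u : ℝⁿ → ℝᴺ by u(x) = γ(x₁). Then u is smooth, |Du|² ≡ M², and u solves Du ⊗ Du : D²u = 0 on ℝⁿ. -/
/-- The partial derivative `D_i f` of a scalar function on `ℝⁿ`. -/
noncomputable def pd {n : ℕ} (f : (Fin n → ℝ) → ℝ) (i : Fin n) (x : Fin n → ℝ) : ℝ :=
  fderiv ℝ f x (Pi.single i 1)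

lemma pd_key {n : ℕ} (i0 : Fin n) (f : ℝ → ℝ) (hf : Differentiable ℝ f) (i : Fin n)
    (x : Fin n → ℝ) :
    pd (fun y => f (y i0)) i x = if i0 = i then deriv f (x i0) else 0 := by
  have hg : HasFDerivAt (fun y : Fin n → ℝ => y i0)
      (ContinuousLinearMap.proj i0 : (Fin n → ℝ) →L[ℝ] ℝ) x :=
    hasFDerivAt_apply i0 x
  have h := (hf (x i0)).hasDerivAt.comp_hasFDerivAt x hg
  have h' : HasFDerivAt (fun y : Fin n → ℝ => f (y i0))
      (deriv f (x i0) • (ContinuousLinearMap.proj i0 : (Fin n → ℝ) →L[ℝ] ℝ)) x := h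
  unfold pd
  rw [h'.fderiv]
  simp [Pi.single_apply]


theorem stmt5 (n N : ℕ) (hn : 0 < n) (M : ℝ) (γ : ℝ → Fin N → ℝ)
    (hγ : ContDiff ℝ (⊤ : ℕ∞) γ)
    (hspeed : ∀ t, ∑ α, (deriv (fun s => γ s α) t)^2 = M^2)
    (u : (Fin n → ℝ) → Fin N → ℝ) (hu : u = fun x => γ (x ⟨0, hn⟩)) :
    ContDiff ℝ (⊤ : ℕ∞) u ∧
    (∀ x, ∑ i, ∑ α, (pd (fun y => u y α) i x)^2 = M^2) ∧
    (∀ x α, ∑ i, ∑ j, ∑ β,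
      pd (fun y => u y α) i x * pd (fun y => u y β) j x *
        pd (pd (fun y => u y β) j) i x = 0) := by
  subst hu
  set i0 : Fin n := ⟨0, hn⟩ with hi0
  have hγβ : ∀ β, ContDiff ℝ (⊤ : ℕ∞) (fun s => γ s β) := fun β => contDiff_pi.1 hγ β
  have hd1 : ∀ β, Differentiable ℝ (fun s => γ s β) := fun β => (hγβ β).differentiable (by simp)
  have hγ' : ∀ β, ContDiff ℝ (⊤ : ℕ∞) (deriv (fun s => γ s β)) :=
    fun β => (contDiff_infty_iff_deriv.1 ((hγβ β).of_le (by simp))).2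
  have hd2 : ∀ β, Differentiable ℝ (deriv (fun s => γ s β)) :=
    fun β => (hγ' β).differentiable (by simp)
  have pdu : ∀ (β : Fin N) (i : Fin n) (x : Fin n → ℝ),
      pd (fun y => γ (y i0) β) i x = if i0 = i then deriv (fun s => γ s β) (x i0) else 0 :=
    fun β i x => pd_key i0 _ (hd1 β) i x
  refine ⟨?_, ?_, ?_⟩
  · exact hγ.comp (ContinuousLinearMap.proj i0 : (Fin n → ℝ) →L[ℝ] ℝ).contDiff
  · intro x
    simp_rw [pdu]
    rw [Finset.sum_comm]
    simp [apply_ite (· ^ (2:ℕ)), Finset.sum_ite_eq]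
    exact hspeed (x i0)
  · intro x α
    -- second derivative fact
    have hzero : ∀ t, ∑ β, deriv (fun s => γ s β) t * deriv (deriv (fun s => γ s β)) t = 0 := by
      intro t
      have hF : HasDerivAt (fun s => ∑ β, (deriv (fun s' => γ s' β) s)^2)
          (∑ β, 2 * (deriv (fun s' => γ s' β) t) ^ 1 * deriv (deriv (fun s' => γ s' β)) t) t := by
        apply HasDerivAt.fun_sum
        intro β _
        exact ((hd2 β t).hasDerivAt).pow 2
      have hconst : (fun s => ∑ β, (deriv (fun s' => γ s' β) s)^2) = fun _ => M^2 :=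
        funext fun s => hspeed s
      have h0 : deriv (fun s => ∑ β, (deriv (fun s' => γ s' β) s)^2) t = 0 := by
        rw [hconst]; simp
      rw [hF.deriv] at h0
      have : (2:ℝ) * ∑ β, deriv (fun s => γ s β) t * deriv (deriv (fun s => γ s β)) t = 0 := by
        rw [Finset.mul_sum]
        rw [← h0]
        congr 1
        ext β
        ring
      linarith
    rw [Finset.sum_eq_single i0]
    · rw [Finset.sum_eq_single i0]
      · have hpdfun : ∀ β : Fin N, pd (fun y => γ (y i0) β) i0
            = fun y => deriv (fun s => γ s β) (y i0) := by
          intro β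
          funext y
          rw [pdu β i0 y]
          simp
        have : ∀ β : Fin N, pd (pd (fun y => γ (y i0) β) i0) i0 x
            = deriv (deriv (fun s => γ s β)) (x i0) := by
          intro β
          rw [hpdfun β, pd_key i0 _ (hd2 β) i0 x]
          simp
        simp_rw [this, pdu]
        simp only [if_true]
        have heq : ∑ β : Fin N, deriv (fun s => γ s α) (x i0) * deriv (fun s => γ s β) (x i0) *
              deriv (deriv fun s => γ s β) (x i0)
            = deriv (fun s => γ s α) (x i0) * ∑ β : Fin N, deriv (fun s => γ s β) (x i0) *
              deriv (deriv fun s => γ s β) (x i0) := by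
          rw [Finset.mul_sum]
          exact Finset.sum_congr rfl fun β _ => by ring
        rw [heq, hzero (x i0), mul_zero]
      · intro j _ hj
        apply Finset.sum_eq_zero
        intro β _
        rw [pdu β j x, if_neg (by exact fun h => hj h.symm)]
        ring
      · simp
    · intro i _ hi
      apply Finset.sum_eq_zero
      intro j _
      apply Finset.sum_eq_zero
      intro β _
      rw [pdu α i x, if_neg (by exact fun h => hi h.symm)]
      ring
    · simp
end

section
/- There exists a smooth map u : ℝⁿ \ {0} → ℝ² solving Du ⊗ Du : D²u = 0 on ℝⁿ \ {0} and a bounded open set Ω with closure contained in ℝⁿ \ {0} such that u(Ω) is not contained in the closed convex hull of u(∂Ω); i.e., the Convex Hull Property fails on a bounded domain. -/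
/-- The partial derivative `D_i f` of a scalar function on Euclidean space. -/
noncomputable def pdE {n : ℕ} (f : EuclideanSpace ℝ (Fin n) → ℝ) (i : Fin n)
    (x : EuclideanSpace ℝ (Fin n)) : ℝ :=
  fderiv ℝ f x (EuclideanSpace.single i 1)

noncomputable def z1 (t : ℝ) : ℝ :=
  if 1 < t ∧ t < 3 then Real.exp (1 / ((2 - t)^2 - 1)) else 0

open Real

section helpers
variable {n : ℕ}
local notation "E" => EuclideanSpace ℝ (Fin n)

lemma myHasFDerivAt_norm {F : Type*} [NormedAddCommGroup F] [InnerProductSpace ℝ F]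
    (x : F) (hx : x ≠ 0) :
    HasFDerivAt (fun y : F => ‖y‖) (‖x‖⁻¹ • innerSL ℝ x) x := by
  have h1 : HasFDerivAt (fun y : F => @inner ℝ _ _ y y) ((2:ℝ) • innerSL ℝ x) x := by
    have := (hasFDerivAt_id x).inner ℝ (hasFDerivAt_id x)
    refine this.congr_fderiv ?_
    ext v
    simp [real_inner_comm, two_smul]
  have h2 : HasDerivAt Real.sqrt (1 / (2 * Real.sqrt (@inner ℝ _ _ x x))) (@inner ℝ _ _ x x) :=
    Real.hasDerivAt_sqrt (by simp [hx])
  have h3 := HasDerivAt.comp_hasFDerivAt (f := fun y : F => (inner ℝ y y : ℝ)) x h2 h1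
  have hne : ‖x‖ ≠ 0 := norm_ne_zero_iff.2 hx
  have hfun : (fun y : F => ‖y‖) = Real.sqrt ∘ fun y : F => inner ℝ y y := by
    ext y
    rw [Function.comp_apply, real_inner_self_eq_norm_sq, Real.sqrt_sq (norm_nonneg y)]
  rw [hfun]
  refine h3.congr_fderiv ?_
  · ext v
    rw [real_inner_self_eq_norm_sq, Real.sqrt_sq (norm_nonneg x)]
    simp
    field_simp

lemma radial_hasFDerivAt (F : ℝ → ℝ) (F' : ℝ) (x : E) (hx : x ≠ 0)
    (hF : HasDerivAt F F' ‖x‖) :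
    HasFDerivAt (fun y : E => F ‖y‖) ((F' / ‖x‖) • innerSL ℝ x) x := by
  have h := hF.comp_hasFDerivAt x (myHasFDerivAt_norm x hx)
  refine h.congr_fderiv ?_
  ext v
  simp [div_eq_mul_inv]
  ring

lemma radial_fderiv_apply (F : ℝ → ℝ) (F' : ℝ) (x : E) (hx : x ≠ 0)
    (hF : HasDerivAt F F' ‖x‖) (i : Fin n) :
    fderiv ℝ (fun y : E => F ‖y‖) x (EuclideanSpace.single i 1) = F' / ‖x‖ * x i := by
  rw [(radial_hasFDerivAt F F' x hx hF).fderiv]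
  simp [EuclideanSpace.inner_single_right]

lemma radial_mul_coord_fderiv (G G' : ℝ → ℝ) (x : E) (hx : x ≠ 0) (j i : Fin n)
    (hG : HasDerivAt G (G' ‖x‖) ‖x‖) :
    fderiv ℝ (fun y : E => G ‖y‖ * y j) x (EuclideanSpace.single i 1)
      = (G' ‖x‖ / ‖x‖ * x i) * x j + G ‖x‖ * (if i = j then 1 else 0) := by
  have h1 : HasFDerivAt (fun y : E => G ‖y‖) ((G' ‖x‖ / ‖x‖) • innerSL ℝ x) x :=
    radial_hasFDerivAt G (G' ‖x‖) x hx hG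
  have h2 : HasFDerivAt (fun y : E => y j) (EuclideanSpace.proj (𝕜 := ℝ) j) x :=
    (EuclideanSpace.proj (𝕜 := ℝ) j).hasFDerivAt
  have h : HasFDerivAt (fun y : E => G ‖y‖ * y j) _ x := h1.mul h2
  rw [h.fderiv]
  simp [EuclideanSpace.inner_single_right, EuclideanSpace.single_apply]
  by_cases hij : i = j
  · simp [hij]; ring
  · simp [hij, Ne.symm hij]; ring

/-- derivative of `t ↦ cos (π t)` -/
lemma hdA0 (r : ℝ) : HasDerivAt (fun t => Real.cos (π * t)) (-Real.sin (π * r) * π) r := by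
  simpa [Function.comp_def] using (Real.hasDerivAt_cos (π * r)).comp r ((hasDerivAt_id r).const_mul π)

lemma hdA1 (r : ℝ) : HasDerivAt (fun t => Real.sin (π * t)) (Real.cos (π * r) * π) r := by
  simpa [Function.comp_def] using (Real.hasDerivAt_sin (π * r)).comp r ((hasDerivAt_id r).const_mul π)

/-- derivative of `t ↦ -sin (π t) * π / t` (the radial coefficient of D cos(π‖·‖)) -/
lemma hdG0 (r : ℝ) (hr : r ≠ 0) :
    HasDerivAt (fun t => -Real.sin (π * t) * π / t)
      ((-Real.cos (π * r) * π * π * r - -Real.sin (π * r) * π * 1) / r ^ 2) r := by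
  have h1 : HasDerivAt (fun t => -Real.sin (π * t) * π) (-Real.cos (π * r) * π * π) r := by
    have := ((hdA1 r).neg).mul_const π
    simpa [mul_comm, mul_assoc, mul_left_comm] using this
  exact h1.div (hasDerivAt_id r) hr

lemma hdG1 (r : ℝ) (hr : r ≠ 0) :
    HasDerivAt (fun t => Real.cos (π * t) * π / t)
      ((-Real.sin (π * r) * π * π * r - Real.cos (π * r) * π * 1) / r ^ 2) r := by
  have h1 : HasDerivAt (fun t => Real.cos (π * t) * π) (-Real.sin (π * r) * π * π) r := by
    have := (hdA0 r).mul_const π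
    simpa [mul_comm, mul_assoc, mul_left_comm] using this
  exact h1.div (hasDerivAt_id r) hr

lemma sum_sq_norm (x : E) : ∑ i, (x i) ^ 2 = ‖x‖ ^ 2 := by
  rw [EuclideanSpace.norm_eq, Real.sq_sqrt (Finset.sum_nonneg fun i _ => sq_nonneg _)]
  simp [Real.norm_eq_abs, sq_abs]

/-- the double-sum reduction -/
lemma sum_reduce (x : E) (P Q : ℝ) :
    ∑ i, ∑ j, (P * ((x i) ^ 2 * (x j) ^ 2) + Q * (x i * x j * (if i = j then 1 else 0)))
      = P * (‖x‖ ^ 2) ^ 2 + Q * ‖x‖ ^ 2 := by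
  have h1 : ∀ i : Fin n, ∑ j, (P * ((x i) ^ 2 * (x j) ^ 2)
      + Q * (x i * x j * (if i = j then 1 else 0)))
      = (P * ‖x‖ ^ 2 + Q) * (x i) ^ 2 := by
    intro i
    rw [Finset.sum_add_distrib]
    have e1 : ∑ j, P * ((x i) ^ 2 * (x j) ^ 2) = P * (x i) ^ 2 * ‖x‖ ^ 2 := by
      rw [← Finset.mul_sum, ← Finset.mul_sum, sum_sq_norm]
      ring
    have e2 : ∑ j, Q * (x i * x j * (if i = j then 1 else 0)) = Q * (x i) ^ 2 := by
      rw [Finset.sum_eq_single i]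
      · rw [if_pos rfl]; ring
      · intro b _ hb; simp [Ne.symm hb]
      · simp
    rw [e1, e2]
    ring
  rw [Finset.sum_congr rfl fun i _ => h1 i, ← Finset.mul_sum, sum_sq_norm]
  ring

end helpers

theorem stmt9 (n : ℕ) (hn : 0 < n) :
    ∃ (u : EuclideanSpace ℝ (Fin n) → Fin 2 → ℝ)
      (Ω : Set (EuclideanSpace ℝ (Fin n))),
      IsOpen Ω ∧ Bornology.IsBounded Ω ∧
      closure Ω ⊆ {(0 : EuclideanSpace ℝ (Fin n))}ᶜ ∧
      ContDiffOn ℝ (⊤ : ℕ∞) u {(0 : EuclideanSpace ℝ (Fin n))}ᶜ ∧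
      (∀ x : EuclideanSpace ℝ (Fin n), x ≠ 0 → ∀ α, ∑ i, ∑ j, ∑ β,
        pdE (fun y => u y α) i x * pdE (fun y => u y β) j x *
          pdE (pdE (fun y => u y β) j) i x = 0) ∧
      ¬ (u '' Ω ⊆ closure (convexHull ℝ (u '' frontier Ω))) := by
  refine ⟨fun y => ![Real.cos (π * ‖y‖), Real.sin (π * ‖y‖)],
    {y : EuclideanSpace ℝ (Fin n) | 1 < ‖y‖ ∧ ‖y‖ < 3}, ?_, ?_, ?_, ?_, ?_, ?_⟩
  · have : {y : EuclideanSpace ℝ (Fin n) | 1 < ‖y‖ ∧ ‖y‖ < 3}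
        = (fun y : EuclideanSpace ℝ (Fin n) => ‖y‖) ⁻¹' Set.Ioo 1 3 := rfl
    rw [this]
    exact isOpen_Ioo.preimage continuous_norm
  · refine (Metric.isBounded_closedBall (x := (0:EuclideanSpace ℝ (Fin n))) (r := 3)).subset ?_
    intro y hy
    exact mem_closedBall_zero_iff.2 hy.2.le
  · have hcl : closure {y : EuclideanSpace ℝ (Fin n) | 1 < ‖y‖ ∧ ‖y‖ < 3}
        ⊆ {y : EuclideanSpace ℝ (Fin n) | 1 ≤ ‖y‖ ∧ ‖y‖ ≤ 3} := by
      refine closure_minimal (fun y hy => ⟨hy.1.le, hy.2.le⟩) ?_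
      have : {y : EuclideanSpace ℝ (Fin n) | 1 ≤ ‖y‖ ∧ ‖y‖ ≤ 3}
          = (fun y : EuclideanSpace ℝ (Fin n) => ‖y‖) ⁻¹' Set.Icc 1 3 := rfl
      rw [this]
      exact isClosed_Icc.preimage continuous_norm
    intro y hy
    have h := hcl hy
    simp only [Set.mem_compl_iff, Set.mem_singleton_iff]
    intro h0
    rw [h0] at h
    simp at h
    linarith
  · -- smoothness
    rw [contDiffOn_pi]
    intro i
    fin_cases i
    · intro x hx
      have hx' : x ≠ 0 := hx
      exact ((Real.contDiff_cos.contDiffAt.comp x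
        ((contDiffAt_const (c := π)).mul (contDiffAt_norm ℝ hx')))).contDiffWithinAt
    · intro x hx
      have hx' : x ≠ 0 := hx
      exact ((Real.contDiff_sin.contDiffAt.comp x
        ((contDiffAt_const (c := π)).mul (contDiffAt_norm ℝ hx')))).contDiffWithinAt
  · -- the PDE
    intro x hx α
    set r := ‖x‖ with hr_def
    have hr : r ≠ 0 := norm_ne_zero_iff.2 hx
    set s := Real.sin (π * r) with hs_def
    set c := Real.cos (π * r) with hc_def
    have pyth : s ^ 2 + c ^ 2 = 1 := Real.sin_sq_add_cos_sq (π * r)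
    -- first derivatives
    have hpd0 : ∀ (y : EuclideanSpace ℝ (Fin n)), y ≠ 0 → ∀ k,
        pdE (fun z => Real.cos (π * ‖z‖)) k y = -Real.sin (π * ‖y‖) * π / ‖y‖ * y k :=
      fun y hy k => radial_fderiv_apply _ _ y hy (hdA0 ‖y‖) k
    have hpd1 : ∀ (y : EuclideanSpace ℝ (Fin n)), y ≠ 0 → ∀ k,
        pdE (fun z => Real.sin (π * ‖z‖)) k y = Real.cos (π * ‖y‖) * π / ‖y‖ * y k :=
      fun y hy k => radial_fderiv_apply _ _ y hy (hdA1 ‖y‖) k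
    -- second derivatives
    have hpdd0 : ∀ j i : Fin n,
        pdE (pdE (fun z => Real.cos (π * ‖z‖)) j) i x
          = ((-c * π * π * r - -s * π * 1) / r ^ 2 / r * x i) * x j
            + (-s * π / r) * (if i = j then 1 else 0) := by
      intro j i
      have hev : (fun y => pdE (fun z => Real.cos (π * ‖z‖)) j y)
          =ᶠ[nhds x] (fun y => (-Real.sin (π * ‖y‖) * π / ‖y‖) * y j) := by
        filter_upwards [isOpen_compl_singleton.mem_nhds hx] with y hy
        exact hpd0 y hy j
      show fderiv ℝ (pdE (fun z => Real.cos (π * ‖z‖)) j) x (EuclideanSpace.single i 1) = _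
      rw [hev.fderiv_eq]
      exact radial_mul_coord_fderiv (fun t => -Real.sin (π * t) * π / t)
        (fun t => (-Real.cos (π * t) * π * π * t - -Real.sin (π * t) * π * 1) / t ^ 2)
        x hx j i (hdG0 r hr)
    have hpdd1 : ∀ j i : Fin n,
        pdE (pdE (fun z => Real.sin (π * ‖z‖)) j) i x
          = ((-s * π * π * r - c * π * 1) / r ^ 2 / r * x i) * x j
            + (c * π / r) * (if i = j then 1 else 0) := by
      intro j i
      have hev : (fun y => pdE (fun z => Real.sin (π * ‖z‖)) j y)
          =ᶠ[nhds x] (fun y => (Real.cos (π * ‖y‖) * π / ‖y‖) * y j) := by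
        filter_upwards [isOpen_compl_singleton.mem_nhds hx] with y hy
        exact hpd1 y hy j
      show fderiv ℝ (pdE (fun z => Real.sin (π * ‖z‖)) j) x (EuclideanSpace.single i 1) = _
      rw [hev.fderiv_eq]
      exact radial_mul_coord_fderiv (fun t => Real.cos (π * t) * π / t)
        (fun t => (-Real.sin (π * t) * π * π * t - Real.cos (π * t) * π * 1) / t ^ 2)
        x hx j i (hdG1 r hr)
    -- the coefficient of the α-component first derivative
    have main : ∀ A : ℝ, ∑ i, ∑ j,
        ((A / r * x i) * (-s * π / r * x j) *
            (((-c * π * π * r - -s * π * 1) / r ^ 2 / r * x i) * x j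
              + (-s * π / r) * (if i = j then 1 else 0))
          + (A / r * x i) * (c * π / r * x j) *
            (((-s * π * π * r - c * π * 1) / r ^ 2 / r * x i) * x j
              + (c * π / r) * (if i = j then 1 else 0))) = 0 := by
      intro A
      have key : ∀ i j : Fin n,
          ((A / r * x i) * (-s * π / r * x j) *
              (((-c * π * π * r - -s * π * 1) / r ^ 2 / r * x i) * x j
                + (-s * π / r) * (if i = j then 1 else 0))
            + (A / r * x i) * (c * π / r * x j) *
              (((-s * π * π * r - c * π * 1) / r ^ 2 / r * x i) * x j
                + (c * π / r) * (if i = j then 1 else 0)))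
          = (A * (-(π^2)) / r ^ 5) * ((x i) ^ 2 * (x j) ^ 2)
            + (A * π ^ 2 / r ^ 3) * (x i * x j * (if i = j then 1 else 0)) := by
        intro i j
        generalize (if i = j then (1:ℝ) else 0) = δ
        field_simp
        linear_combination (A*(x i)*(x j)*(-(x i)*(x j) + r^2*δ)) * pyth
      rw [Finset.sum_congr rfl fun i _ => Finset.sum_congr rfl fun j _ => key i j]
      rw [sum_reduce]
      rw [← hr_def]
      field_simp
      ring
    -- put it together
    have expand : ∀ β : Fin 2, True := fun _ => trivial
    fin_cases α
    · simp only [Fin.sum_univ_two, Fin.mk_zero, Fin.mk_one, Matrix.cons_val_zero,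
        Matrix.cons_val_one, Matrix.head_cons]
      have h0 := hpd0 x hx
      have h1 := hpd1 x hx
      rw [Finset.sum_congr rfl fun i _ => Finset.sum_congr rfl fun j _ => by
        rw [h0 i, h0 j, h1 j, hpdd0 j i, hpdd1 j i, ← hr_def, ← hs_def, ← hc_def]]
      exact main (-s * π)
    · simp only [Fin.sum_univ_two, Fin.mk_zero, Fin.mk_one, Matrix.cons_val_zero,
        Matrix.cons_val_one, Matrix.head_cons]
      have h0 := hpd0 x hx
      have h1 := hpd1 x hx
      rw [Finset.sum_congr rfl fun i _ => Finset.sum_congr rfl fun j _ => by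
        rw [h1 i, h0 j, h1 j, hpdd0 j i, hpdd1 j i, ← hr_def, ← hs_def, ← hc_def]]
      exact main (c * π)
  · -- failure of the convex hull property
    intro hsub
    set i0 : Fin n := ⟨0, hn⟩
    set x2 : EuclideanSpace ℝ (Fin n) := (2:ℝ) • EuclideanSpace.single i0 1 with hx2
    have hnx2 : ‖x2‖ = 2 := by
      rw [hx2, norm_smul, EuclideanSpace.norm_single]
      norm_num
    have hx2mem : x2 ∈ {y : EuclideanSpace ℝ (Fin n) | 1 < ‖y‖ ∧ ‖y‖ < 3} := by
      rw [Set.mem_setOf_eq, hnx2]; norm_num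
    have hmem := hsub ⟨x2, hx2mem, rfl⟩
    -- the frontier maps to the single point ![-1, 0]
    have hfr : (fun y => ![Real.cos (π * ‖y‖), Real.sin (π * ‖y‖)]) ''
        frontier {y : EuclideanSpace ℝ (Fin n) | 1 < ‖y‖ ∧ ‖y‖ < 3} ⊆ {![-1, 0]} := by
      rintro p ⟨y, hy, rfl⟩
      have hyy : ‖y‖ = 1 ∨ ‖y‖ = 3 := by
        have h1 : y ∈ closure {y : EuclideanSpace ℝ (Fin n) | 1 < ‖y‖ ∧ ‖y‖ < 3} :=
          hy.1
        have h2 : y ∉ {y : EuclideanSpace ℝ (Fin n) | 1 < ‖y‖ ∧ ‖y‖ < 3} := by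
          intro hmem'
          have hopen : IsOpen {y : EuclideanSpace ℝ (Fin n) | 1 < ‖y‖ ∧ ‖y‖ < 3} := by
            have : {y : EuclideanSpace ℝ (Fin n) | 1 < ‖y‖ ∧ ‖y‖ < 3}
                = (fun y : EuclideanSpace ℝ (Fin n) => ‖y‖) ⁻¹' Set.Ioo 1 3 := rfl
            rw [this]; exact isOpen_Ioo.preimage continuous_norm
          exact hy.2 (by rwa [hopen.interior_eq])
        have h3 : 1 ≤ ‖y‖ ∧ ‖y‖ ≤ 3 := by
          have hcl : closure {y : EuclideanSpace ℝ (Fin n) | 1 < ‖y‖ ∧ ‖y‖ < 3}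
              ⊆ {y : EuclideanSpace ℝ (Fin n) | 1 ≤ ‖y‖ ∧ ‖y‖ ≤ 3} := by
            refine closure_minimal (fun y hy => ⟨hy.1.le, hy.2.le⟩) ?_
            have : {y : EuclideanSpace ℝ (Fin n) | 1 ≤ ‖y‖ ∧ ‖y‖ ≤ 3}
                = (fun y : EuclideanSpace ℝ (Fin n) => ‖y‖) ⁻¹' Set.Icc 1 3 := rfl
            rw [this]; exact isClosed_Icc.preimage continuous_norm
          exact hcl h1
        rw [Set.mem_setOf_eq, not_and_or, not_lt, not_lt] at h2
        rcases h2 with h | h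
        · left; linarith [h3.1]
        · right; linarith [h3.2]
      rw [Set.mem_singleton_iff]
      rcases hyy with h | h
      · funext β
        fin_cases β <;> simp [h, Real.cos_pi, Real.sin_pi]
      · funext β
        have e3 : π * 3 = π + 2 * π := by ring
        fin_cases β <;>
          simp [h, e3, Real.cos_add_two_pi, Real.sin_add_two_pi, Real.cos_pi, Real.sin_pi]
    have hhull : closure (convexHull ℝ ((fun y => ![Real.cos (π * ‖y‖), Real.sin (π * ‖y‖)]) ''
        frontier {y : EuclideanSpace ℝ (Fin n) | 1 < ‖y‖ ∧ ‖y‖ < 3}))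
        ⊆ {![-1, 0]} := by
      have h1 := convexHull_mono (𝕜 := ℝ) hfr
      rw [convexHull_singleton] at h1
      calc closure _ ⊆ closure {![-1, 0]} := closure_mono h1
        _ = {![-1, 0]} := closure_singleton
    have hthis := hhull hmem
    rw [Set.mem_singleton_iff] at hthis
    have h0 : Real.cos (π * ‖x2‖) = -1 := by
      have := congrFun hthis 0
      simpa using this
    rw [hnx2, show π * 2 = 2 * π by ring, Real.cos_two_pi] at h0
    norm_num at h0
end

section
/- For the map u(x) = (z₁(|x|), z₂(|x|)) on Ω = {1 < |x| < 3}, one has sup_Ω (e₁ · u) > 0 = max_{∂Ω} (e₁ · u), where e₁ = (1,0). -/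
lemma z1_le_one (t : ℝ) : z1 t ≤ 1 := by
  unfold z1
  split_ifs with h
  · rcases h with ⟨h1, h3⟩
    have hneg : (2 - t)^2 - 1 < 0 := by nlinarith
    have : 1 / ((2 - t)^2 - 1) ≤ 0 := le_of_lt (div_neg_of_pos_of_neg one_pos hneg)
    calc Real.exp (1 / ((2 - t)^2 - 1)) ≤ Real.exp 0 := Real.exp_le_exp.mpr this
      _ = 1 := Real.exp_zero
  · norm_num

theorem stmt10 (n : ℕ) (hn : 0 < n) (z2 : ℝ → ℝ)
    (u : EuclideanSpace ℝ (Fin n) → Fin 2 → ℝ)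
    (hu : u = fun x => ![z1 ‖x‖, z2 ‖x‖])
    (Ω : Set (EuclideanSpace ℝ (Fin n)))
    (hΩ : Ω = {x | 1 < ‖x‖ ∧ ‖x‖ < 3}) :
    sSup ((fun x => u x 0) '' Ω) > 0 ∧ ∀ x ∈ frontier Ω, u x 0 = 0 := by
  subst hu hΩ
  constructor
  · -- sup > 0
    set x0 : EuclideanSpace ℝ (Fin n) := EuclideanSpace.single ⟨0, hn⟩ (2 : ℝ) with hx0
    have hnorm : ‖x0‖ = 2 := by
      rw [hx0, EuclideanSpace.norm_single]; norm_num
    have hmem : x0 ∈ {x : EuclideanSpace ℝ (Fin n) | 1 < ‖x‖ ∧ ‖x‖ < 3} := by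
      constructor <;> (rw [hnorm]; norm_num)
    have hval : z1 ‖x0‖ = Real.exp (-1) := by
      rw [hnorm]; unfold z1; norm_num
    have hbdd : BddAbove ((fun x => (![z1 ‖x‖, z2 ‖x‖] : Fin 2 → ℝ) 0) ''
        {x : EuclideanSpace ℝ (Fin n) | 1 < ‖x‖ ∧ ‖x‖ < 3}) := by
      refine ⟨1, ?_⟩
      rintro y ⟨x, _, rfl⟩
      simpa using z1_le_one ‖x‖
    have hle : Real.exp (-1) ≤ sSup ((fun x => (![z1 ‖x‖, z2 ‖x‖] : Fin 2 → ℝ) 0) ''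
        {x : EuclideanSpace ℝ (Fin n) | 1 < ‖x‖ ∧ ‖x‖ < 3}) := by
      apply le_csSup hbdd
      exact ⟨x0, hmem, by simpa using hval⟩
    exact lt_of_lt_of_le (Real.exp_pos _) hle
  · intro x hx
    have hopen : IsOpen {x : EuclideanSpace ℝ (Fin n) | 1 < ‖x‖ ∧ ‖x‖ < 3} := by
      have : Continuous fun x : EuclideanSpace ℝ (Fin n) => ‖x‖ := continuous_norm
      exact (isOpen_lt continuous_const this).inter (isOpen_lt this continuous_const)
    have hnot : x ∉ {x : EuclideanSpace ℝ (Fin n) | 1 < ‖x‖ ∧ ‖x‖ < 3} := by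
      intro hmem
      exact hx.2 (by rwa [hopen.interior_eq])
    simp only [Matrix.cons_val_zero]
    unfold z1
    exact if_neg hnot
end

section
/- Define u : ℝⁿ → ℝ² by u(x) = ρ(x₁) n(x₁) where ρ(t) = exp(-t²), n(t) = (cos K(t), sin K(t)), K(t) = ∫₀ᵗ √((M² - ρ'(s)²)/ρ(s)²) ds, and M > sup|ρ'|. Then u is smooth, |Du| ≡ M, and u solves Du ⊗ Du : D²u = 0 on ℝⁿ. -/
open Filter FormalMultilinearSeries
open scoped ENNReal NNReal Topology

/-- Coefficients of the formal antiderivative. -/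
noncomputable def primCoeff (K0 : ℝ) (c : ℕ → ℝ) : ℕ → ℝ
  | 0 => K0
  | n + 1 => c n / (n + 1)

/-- Termwise derivatives of the antiderivative power series. -/
noncomputable def primDer (c : ℕ → ℝ) : ℕ → ℝ → ℝ
  | 0, _ => 0
  | n + 1, z => c n * z ^ n

/-- A function with an analytic derivative is analytic. -/
theorem analyticAt_of_hasDerivAt {φ K : ℝ → ℝ} (hφ : ∀ t, AnalyticAt ℝ φ t)
    (hK : ∀ t, HasDerivAt K (φ t) t) (t : ℝ) : AnalyticAt ℝ K t := by
  obtain ⟨p, r, hp⟩ : ∃ p r, HasFPowerSeriesOnBall φ p t r := by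
    obtain ⟨p, hp⟩ := hφ t
    obtain ⟨r, hr⟩ := hp
    exact ⟨p, r, hr⟩
  set c : ℕ → ℝ := fun n => p.coeff n with hc
  set qc : ℕ → ℝ := primCoeff (K t) c with hqc
  set q : FormalMultilinearSeries ℝ ℝ ℝ := FormalMultilinearSeries.ofScalars ℝ qc with hqdef
  have hcb : ∀ n, |c n| = ‖p n‖ := fun n => by
    rw [p.norm_apply_eq_norm_coef]; rfl
  have hqn : ∀ n, ‖q n‖ = |qc n| := fun n => by
    rw [hqdef, FormalMultilinearSeries.ofScalars_norm]; rfl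
  -- radius of q is at least r
  have hrq : r ≤ q.radius := by
    refine ENNReal.le_of_forall_nnreal_lt fun s hs => ?_
    obtain ⟨C, hC0, hC⟩ := p.norm_mul_pow_le_of_lt_radius (lt_of_lt_of_le hs hp.r_le)
    refine q.le_radius_of_bound (max |K t| (C * s)) fun n => ?_
    match n with
    | 0 =>
      simp only [pow_zero, mul_one, hqn]
      exact le_max_left _ _
    | m + 1 =>
      have h1 : |qc (m + 1)| ≤ ‖p m‖ := by
        have : |qc (m+1)| = |c m| / (m+1) := by
          rw [hqc]; show |c m / (m+1)| = _
          rw [abs_div, abs_of_nonneg (by positivity : (0:ℝ) ≤ (m:ℝ)+1)]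
        rw [this, ← hcb m]
        exact div_le_self (abs_nonneg _) (by norm_num)
      have h2 : |qc (m+1)| * ((s:ℝ) ^ m * (s:ℝ)) ≤ C * s := by
        calc |qc (m+1)| * ((s:ℝ)^m * (s:ℝ)) ≤ ‖p m‖ * ((s:ℝ)^m * (s:ℝ)) :=
              mul_le_mul_of_nonneg_right h1 (by positivity)
          _ = (‖p m‖ * (s:ℝ)^m) * (s:ℝ) := by ring
          _ ≤ C * s := mul_le_mul_of_nonneg_right (hC m) s.coe_nonneg
      rw [hqn, pow_succ]
      exact le_trans h2 (le_max_right _ _)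
  have hq0 : 0 < q.radius := lt_of_lt_of_le hp.r_pos hrq
  -- pick a real radius ε
  obtain ⟨ε, hε0, hεr⟩ : ∃ ε : ℝ≥0, 0 < (ε : ℝ≥0∞) ∧ (ε : ℝ≥0∞) < r := by
    obtain ⟨ε, h1, h2⟩ := ENNReal.lt_iff_exists_nnreal_btwn.mp hp.r_pos
    exact ⟨ε, h1, h2⟩
  have hε0' : 0 < (ε : ℝ) := by exact_mod_cast hε0
  set B : Set ℝ := Metric.ball (0 : ℝ) ε with hB
  have hmemE : ∀ z : ℝ, z ∈ B → z ∈ Metric.eball (0 : ℝ) r := by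
    intro z hz
    rw [Metric.mem_eball, edist_zero_right]
    refine lt_trans ?_ hεr
    rw [enorm_eq_nnnorm, ENNReal.coe_lt_coe, ← NNReal.coe_lt_coe, coe_nnnorm, Real.norm_eq_abs]
    simpa [hB, Real.dist_eq] using hz
  -- Summable bound
  have hsum : Summable (fun n => ‖p n‖ * (ε : ℝ) ^ n) :=
    p.summable_norm_mul_pow (lt_of_lt_of_le hεr hp.r_le)
  set ub : ℕ → ℝ := fun n => Nat.rec 0 (fun m _ => ‖p m‖ * (ε : ℝ) ^ m) n with hub
  have hubs : Summable ub := by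
    have : Summable (fun n => ub (n + 1)) := hsum
    exact (summable_nat_add_iff 1).mp this
  -- termwise derivatives
  have hderiv : ∀ (m : ℕ) (z : ℝ), z ∈ B → HasDerivAt (fun w => qc m * w ^ m) (primDer c m z) z := by
    intro m z _
    have h := (hasDerivAt_pow m z).const_mul (qc m)
    refine h.congr_deriv (Eq.symm ?_)
    cases m with
    | zero => simp [primDer]
    | succ k =>
      have hq1 : qc (k+1) = c k / ((k:ℝ)+1) := by rw [hqc]; simp [primCoeff]
      simp only [primDer, hq1]
      have hk : ((k:ℝ)+1) ≠ 0 := by positivity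
      push_cast
      field_simp
  have hbound : ∀ (m : ℕ) (z : ℝ), z ∈ B → ‖primDer c m z‖ ≤ ub m := by
    intro m z hz
    cases m with
    | zero => simp [primDer, hub]
    | succ k =>
      show ‖c k * z ^ k‖ ≤ ‖p k‖ * (ε : ℝ) ^ k
      have hza : |z| ≤ (ε : ℝ) := le_of_lt (by simpa [hB, Real.dist_eq] using hz)
      calc ‖c k * z ^ k‖ = |c k| * |z| ^ k := by
            rw [Real.norm_eq_abs, abs_mul, abs_pow]
        _ ≤ ‖p k‖ * (ε : ℝ) ^ k := by
            rw [hcb k]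
            exact mul_le_mul_of_nonneg_left (pow_le_pow_left₀ (abs_nonneg z) hza k)
              (norm_nonneg _)
  have hg0 : Summable (fun n => qc n * (0:ℝ) ^ n) := by
    apply summable_of_ne_finset_zero (s := {0})
    intro b hb
    have : b ≠ 0 := by simpa using hb
    simp [zero_pow this]
  -- the derivative of the sum
  have hKey : ∀ z ∈ B, HasDerivAt (fun w => ∑' m, qc m * w ^ m) (∑' m, primDer c m z) z := by
    intro z hz
    exact hasDerivAt_tsum_of_isPreconnected hubs Metric.isOpen_ball
      (convex_ball (0:ℝ) (ε:ℝ)).isPreconnected hderiv hbound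
      (Metric.mem_ball_self hε0') hg0 hz
  -- identify the derivative with φ
  have hsum_eq : ∀ z ∈ B, (∑' m, primDer c m z) = φ (t + z) := by
    intro z hz
    have h1 : HasSum (fun m : ℕ => p m fun _ => z) (φ (t + z)) := hp.hasSum (hmemE z hz)
    have h2 : HasSum (fun m : ℕ => c m * z ^ m) (φ (t + z)) := by
      have : (fun m : ℕ => p m fun _ => z) = fun m : ℕ => c m * z ^ m := by
        funext m
        rw [p.apply_eq_pow_smul_coeff, smul_eq_mul, mul_comm]
      rwa [this] at h1
    have h3 : HasSum (fun m : ℕ => primDer c (m + 1) z) (φ (t + z)) := h2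
    have h4 := (hasSum_nat_add_iff (f := fun m => primDer c m z) 1).mp h3
    simpa [primDer] using h4.tsum_eq
  -- the sum of q
  have hqsum : ∀ z : ℝ, q.sum z = ∑' m, qc m * z ^ m := by
    intro z
    rw [hqdef, FormalMultilinearSeries.sum]
    congr 1
    funext m
    rw [FormalMultilinearSeries.ofScalars_apply_eq, smul_eq_mul]
  -- q.sum is analytic
  have hG : AnalyticAt ℝ (fun y => q.sum (y - t) + (K t - q.sum 0)) t := by
    have hsub : AnalyticAt ℝ (fun y : ℝ => y - t) t := analyticAt_id.sub analyticAt_const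
    have hq : AnalyticAt ℝ q.sum ((fun y : ℝ => y - t) t) := by
      simpa using (q.hasFPowerSeriesOnBall hq0).analyticAt
    exact ((hq.comp (f := fun y : ℝ => y - t) hsub).add analyticAt_const)
  -- K agrees with this analytic function near t
  have heq : ∀ y ∈ Metric.ball t (ε : ℝ), K y = q.sum (y - t) + (K t - q.sum 0) := by
    have hh : ∀ y ∈ Metric.ball t (ε : ℝ),
        HasDerivAt (fun w => K w - q.sum (w - t)) 0 y := by
      intro y hy
      have hz : y - t ∈ B := by
        simpa [hB, Real.dist_eq, Metric.mem_ball] using hy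
      have h2 := (hKey (y - t) hz).comp y ((hasDerivAt_id y).sub_const t)
      have hfun : (fun w : ℝ => q.sum (w - t)) = fun w => ∑' m, qc m * (w - t) ^ m := by
        funext w; rw [hqsum]
      have h3 : HasDerivAt (fun w => q.sum (w - t)) ((∑' m, primDer c m (y - t)) * 1) y := by
        rw [hfun]; exact h2
      have h3' : (∑' m, primDer c m (y - t)) * 1 = φ y := by
        rw [hsum_eq _ hz, mul_one, add_sub_cancel]
      rw [h3'] at h3
      have h4 := (hK y).sub h3
      rw [sub_self] at h4
      exact h4
    intro y hy
    have hconst : K y - q.sum (y - t) = K t - q.sum (t - t) := by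
      apply Convex.is_const_of_fderivWithin_eq_zero (convex_ball t (ε:ℝ))
        (fun z hz => ((hh z hz).differentiableAt).differentiableWithinAt)
        (fun z hz => ?_) hy (Metric.mem_ball_self hε0')
      rw [fderivWithin_of_isOpen Metric.isOpen_ball hz, (hh z hz).hasFDerivAt.fderiv]
      exact ContinuousLinearMap.ext fun w => by simp
    rw [sub_self] at hconst
    linarith [hconst]
  refine hG.congr ?_
  filter_upwards [Metric.ball_mem_nhds t hε0'] with y hy
  exact (heq y hy).symm

theorem pd_comp {n : ℕ} (e0 i : Fin n) (F : ℝ → ℝ) (hF : Differentiable ℝ F)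
    (x : Fin n → ℝ) :
    pd (fun y => F (y e0)) i x = if i = e0 then deriv F (x e0) else 0 := by
  have hL : (fun y : Fin n → ℝ => F (y e0)) =
      F ∘ (ContinuousLinearMap.proj (R := ℝ) (φ := fun _ : Fin n => ℝ) e0) := rfl
  unfold pd
  rw [hL, fderiv_comp (x := x) (hF.differentiableAt) (ContinuousLinearMap.differentiableAt _),
    ContinuousLinearMap.fderiv]
  simp only [ContinuousLinearMap.coe_comp', Function.comp_apply,
    ContinuousLinearMap.proj_apply]
  rcases eq_or_ne i e0 with h | h
  · subst h
    simp [Pi.single_eq_same, fderiv_apply_one_eq_deriv]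
  · rw [Pi.single_eq_of_ne (Ne.symm h)]
    simp [h]

theorem stmt14 (n : ℕ) (hn : 0 < n) (M : ℝ) (ρ K : ℝ → ℝ)
    (hρ : ρ = fun t => Real.exp (-t^2))
    (hM : ∃ S : ℝ, (∀ t : ℝ, |deriv ρ t| ≤ S) ∧ S < M)
    (hK : K = fun t => ∫ s in (0:ℝ)..t, Real.sqrt ((M^2 - (deriv ρ s)^2) / (ρ s)^2))
    (u : (Fin n → ℝ) → Fin 2 → ℝ)
    (hu : u = fun x => ![ρ (x ⟨0, hn⟩) * Real.cos (K (x ⟨0, hn⟩)),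
                         ρ (x ⟨0, hn⟩) * Real.sin (K (x ⟨0, hn⟩))]) :
    ContDiff ℝ (⊤ : ℕ∞) u ∧
    (∀ x, ∑ i, ∑ α, (pd (fun y => u y α) i x)^2 = M^2) ∧
    (∀ x α, ∑ i, ∑ j, ∑ β,
      pd (fun y => u y α) i x * pd (fun y => u y β) j x *
        pd (pd (fun y => u y β) j) i x = 0) := by
  obtain ⟨S, hS1, hSM⟩ := hM
  set e0 : Fin n := ⟨0, hn⟩ with he0
  -- derivative of ρ
  have hρd : ∀ t, HasDerivAt ρ (-2 * t * Real.exp (-t^2)) t := by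
    intro t
    rw [hρ]
    have h1 : HasDerivAt (fun t : ℝ => -t^2) (-2*t) t := by
      exact (hasDerivAt_pow 2 t).neg.congr_deriv (by norm_num)
    simpa [mul_comm] using h1.exp
  have hρ' : deriv ρ = fun t => -2 * t * Real.exp (-t^2) := funext fun t => (hρd t).deriv
  have hρcd : ContDiff ℝ (⊤ : ℕ∞) ρ := by
    rw [hρ]
    exact Real.contDiff_exp.comp ((contDiff_id.pow 2).neg)
  have hρdcd : ContDiff ℝ (⊤ : ℕ∞) (deriv ρ) := by
    rw [hρ']
    exact (contDiff_const.mul contDiff_id).mul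
      (Real.contDiff_exp.comp ((contDiff_id.pow 2).neg))
  have hρpos : ∀ t, 0 < ρ t := by intro t; rw [hρ]; exact Real.exp_pos _
  have hS0 : 0 ≤ S := le_trans (abs_nonneg _) (hS1 0)
  have hMpos : ∀ t, 0 < M^2 - (deriv ρ t)^2 := by
    intro t
    have h1 : |deriv ρ t| ≤ S := hS1 t
    nlinarith [abs_nonneg (deriv ρ t), sq_abs (deriv ρ t)]
  set φ : ℝ → ℝ := fun s => Real.sqrt ((M^2 - (deriv ρ s)^2) / (ρ s)^2) with hφdef
  have hinner_pos : ∀ t, 0 < (M^2 - (deriv ρ t)^2) / (ρ t)^2 :=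
    fun t => div_pos (hMpos t) (pow_pos (hρpos t) 2)
  have hφcd : ContDiff ℝ (⊤ : ℕ∞) φ := by
    apply ContDiff.sqrt
    · exact (contDiff_const.sub (hρdcd.pow 2)).div (hρcd.pow 2)
        (fun t => (pow_pos (hρpos t) 2).ne')
    · exact fun t => (hinner_pos t).ne'
  have hKd : ∀ t, HasDerivAt K (φ t) t := by
    intro t
    rw [hK]
    exact intervalIntegral.integral_hasDerivAt_right
      (hφcd.continuous.intervalIntegrable _ _)
      (hφcd.continuous.stronglyMeasurableAtFilter _ _)
      hφcd.continuous.continuousAt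
  have hρω : ContDiff ℝ (⊤ : WithTop ℕ∞) ρ := by
    rw [hρ]
    exact Real.contDiff_exp.comp ((contDiff_id.pow 2).neg)
  have hρdω : ContDiff ℝ (⊤ : WithTop ℕ∞) (deriv ρ) := by
    rw [hρ']
    exact (contDiff_const.mul contDiff_id).mul
      (Real.contDiff_exp.comp ((contDiff_id.pow 2).neg))
  have hφω : ContDiff ℝ (⊤ : WithTop ℕ∞) φ := by
    apply ContDiff.sqrt
    · exact (contDiff_const.sub (hρdω.pow 2)).div (hρω.pow 2)
        (fun t => (pow_pos (hρpos t) 2).ne')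
    · exact fun t => (hinner_pos t).ne'
  have hKan : ∀ t, AnalyticAt ℝ K t :=
    analyticAt_of_hasDerivAt (fun t => (hφω.contDiffAt).analyticAt) hKd
  have hKcd : ContDiff ℝ (⊤ : ℕ∞) K := AnalyticOnNhd.contDiff (fun t _ => hKan t)
  set f : ℝ → ℝ := fun t => ρ t * Real.cos (K t) with hfdef
  set g : ℝ → ℝ := fun t => ρ t * Real.sin (K t) with hgdef
  have hρd' : ∀ t, HasDerivAt ρ (deriv ρ t) t :=
    fun t => ((hρcd.differentiable (by simp)) t).hasDerivAt
  have hfd : ∀ t, HasDerivAt f (deriv ρ t * Real.cos (K t) + ρ t * (-Real.sin (K t) * φ t)) t :=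
    fun t => (hρd' t).mul ((hKd t).cos)
  have hgd : ∀ t, HasDerivAt g (deriv ρ t * Real.sin (K t) + ρ t * (Real.cos (K t) * φ t)) t :=
    fun t => (hρd' t).mul ((hKd t).sin)
  have hfderiv : ∀ t, deriv f t = deriv ρ t * Real.cos (K t) + ρ t * (-Real.sin (K t) * φ t) :=
    fun t => (hfd t).deriv
  have hgderiv : ∀ t, deriv g t = deriv ρ t * Real.sin (K t) + ρ t * (Real.cos (K t) * φ t) :=
    fun t => (hgd t).deriv
  have hfcd : ContDiff ℝ (⊤ : ℕ∞) f := hρcd.mul (Real.contDiff_cos.comp hKcd)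
  have hgcd : ContDiff ℝ (⊤ : ℕ∞) g := hρcd.mul (Real.contDiff_sin.comp hKcd)
  have key1 : ∀ t, (deriv f t)^2 + (deriv g t)^2 = M^2 := by
    intro t
    have hcs : Real.sin (K t)^2 + Real.cos (K t)^2 = 1 := Real.sin_sq_add_cos_sq _
    have hφsq : (ρ t)^2 * (φ t)^2 = M^2 - (deriv ρ t)^2 := by
      have h1 : (φ t)^2 = (M^2 - (deriv ρ t)^2)/(ρ t)^2 := Real.sq_sqrt (hinner_pos t).le
      rw [h1, mul_div_cancel₀ _ (pow_pos (hρpos t) 2).ne']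
    rw [hfderiv t, hgderiv t]
    nlinarith [hcs, hφsq]
  have hKω : ContDiff ℝ (⊤ : WithTop ℕ∞) K := AnalyticOnNhd.contDiff (fun t _ => hKan t)
  have hfω : ContDiff ℝ (⊤ : WithTop ℕ∞) f := hρω.mul (Real.contDiff_cos.comp hKω)
  have hgω : ContDiff ℝ (⊤ : WithTop ℕ∞) g := hρω.mul (Real.contDiff_sin.comp hKω)
  have hfan : AnalyticOnNhd ℝ f Set.univ := fun t _ => (hfω.contDiffAt).analyticAt
  have hgan : AnalyticOnNhd ℝ g Set.univ := fun t _ => (hgω.contDiffAt).analyticAt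
  have hdf : Differentiable ℝ (deriv f) :=
    (AnalyticOnNhd.contDiff (n := (⊤ : WithTop ℕ∞)) hfan.deriv).differentiable (by simp)
  have hdg : Differentiable ℝ (deriv g) :=
    (AnalyticOnNhd.contDiff (n := (⊤ : WithTop ℕ∞)) hgan.deriv).differentiable (by simp)
  have key2 : ∀ t, deriv f t * deriv (deriv f) t + deriv g t * deriv (deriv g) t = 0 := by
    intro t
    have h1 : HasDerivAt (fun s => (deriv f s)^2 + (deriv g s)^2)
        (2 * deriv f t * deriv (deriv f) t + 2 * deriv g t * deriv (deriv g) t) t := by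
      have ha := ((hdf t).hasDerivAt.pow 2)
      have hb := ((hdg t).hasDerivAt.pow 2)
      refine (ha.add hb).congr_deriv ?_
      push_cast
      ring
    have he : (fun s => (deriv f s)^2 + (deriv g s)^2) = fun _ : ℝ => M^2 := funext key1
    rw [he] at h1
    have h3 := h1.unique (hasDerivAt_const t (M^2))
    linarith
  set F : Fin 2 → ℝ → ℝ := ![f, g] with hF
  have hu' : ∀ (β : Fin 2) (y : Fin n → ℝ), u y β = F β (y e0) := by
    intro β y
    rw [hu]
    fin_cases β <;> simp [hF, hfdef, hgdef]
  have hFcd : ∀ β, ContDiff ℝ (⊤ : ℕ∞) (F β) := by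
    intro β; fin_cases β
    · simpa [hF] using hfcd
    · simpa [hF] using hgcd
  have hFdiff : ∀ β, Differentiable ℝ (F β) := fun β => (hFcd β).differentiable (by simp)
  have hFdderiv : ∀ β, Differentiable ℝ (deriv (F β)) := by
    intro β; fin_cases β
    · simpa [hF] using hdf
    · simpa [hF] using hdg
  have hpd : ∀ (β : Fin 2) (i : Fin n) (x : Fin n → ℝ),
      pd (fun y => u y β) i x = if i = e0 then deriv (F β) (x e0) else 0 := by
    intro β i x
    have h1 : (fun y : Fin n → ℝ => u y β) = fun y => F β (y e0) := funext fun y => hu' β y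
    rw [h1]
    exact pd_comp e0 i (F β) (hFdiff β) x
  have hpd2 : ∀ (β : Fin 2) (i j : Fin n) (x : Fin n → ℝ),
      pd (pd (fun y => u y β) j) i x =
      if i = e0 ∧ j = e0 then deriv (deriv (F β)) (x e0) else 0 := by
    intro β i j x
    have h1 : pd (fun y => u y β) j = fun x => if j = e0 then deriv (F β) (x e0) else 0 :=
      funext fun x => hpd β j x
    rw [h1]
    by_cases hj : j = e0
    · simp only [hj, if_true]
      rw [pd_comp e0 i (deriv (F β)) (hFdderiv β) x]
      simp
    · simp only [hj, if_false]
      simp [pd, hj]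
  refine ⟨?_, ?_, ?_⟩
  · refine contDiff_pi.mpr fun β => ?_
    have h1 : (fun x : Fin n → ℝ => u x β) = fun x => F β (x e0) := funext fun y => hu' β y
    rw [h1]
    exact (hFcd β).comp
      (ContinuousLinearMap.proj (R := ℝ) (φ := fun _ : Fin n => ℝ) e0).contDiff
  · intro x
    have hι : ∀ i : Fin n, ∑ α : Fin 2, (pd (fun y => u y α) i x)^2 =
        if i = e0 then (deriv f (x e0))^2 + (deriv g (x e0))^2 else 0 := by
      intro i
      rw [Fin.sum_univ_two, hpd 0 i x, hpd 1 i x]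
      by_cases h : i = e0
      · simp [h, hF]
      · simp [h]
    calc ∑ i, ∑ α : Fin 2, (pd (fun y => u y α) i x)^2
        = ∑ i, if i = e0 then (deriv f (x e0))^2 + (deriv g (x e0))^2 else 0 :=
          Finset.sum_congr rfl fun i _ => hι i
      _ = (deriv f (x e0))^2 + (deriv g (x e0))^2 := by simp
      _ = M^2 := key1 (x e0)
  · intro x α
    have hterm : ∀ (i j : Fin n) (β : Fin 2),
        pd (fun y => u y α) i x * pd (fun y => u y β) j x * pd (pd (fun y => u y β) j) i x =
        if i = e0 ∧ j = e0 then
          deriv (F α) (x e0) * (deriv (F β) (x e0) * deriv (deriv (F β)) (x e0)) else 0 := by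
      intro i j β
      rw [hpd α i x, hpd β j x, hpd2 β i j x]
      by_cases h1 : i = e0 <;> by_cases h2 : j = e0 <;> simp [h1, h2] <;> ring
    refine Finset.sum_eq_zero fun i _ => Finset.sum_eq_zero fun j _ => ?_
    rw [Finset.sum_congr rfl fun β _ => hterm i j β]
    by_cases h : i = e0 ∧ j = e0
    · simp only [if_pos h, ← Finset.mul_sum]
      have hs : ∑ β : Fin 2, deriv (F β) (x e0) * deriv (deriv (F β)) (x e0) = 0 := by
        rw [Fin.sum_univ_two]
        have e1 : F 0 = f := by simp [hF]
        have e2 : F 1 = g := by simp [hF]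
        rw [e1, e2]
        exact key2 (x e0)
      rw [hs, mul_zero]
    · simp [if_neg h]
end

section
/- Let w₁ ∈ C^∞(ℝ), M > sup|w₁'|, w₂(t) = ∫₀ᵗ √(M² - w₁'(s)²) ds, and define v(x) = w₁(x₁) and F(x) = ½ w₂'(x₁)² for x ∈ ℝⁿ. Then v and F are smooth and v solves the perturbed ∞-Laplace equation Dv ⊗ Dv : D²v + Dv · DF = 0 on ℝⁿ. -/
lemma pd_comp_s16 {n : ℕ} (e : Fin n) (g : ℝ → ℝ) (x : Fin n → ℝ)
    (hg : DifferentiableAt ℝ g (x e)) (i : Fin n) :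
    pd (fun y => g (y e)) i x = deriv g (x e) * (Pi.single i 1 : Fin n → ℝ) e := by
  have hp := hasFDerivAt_apply (𝕜 := ℝ) e x
  have h1 : HasFDerivAt (fun y : Fin n → ℝ => g (y e))
      (((1 : ℝ →L[ℝ] ℝ).smulRight (deriv g (x e))).comp (ContinuousLinearMap.proj e)) x :=
    hg.hasDerivAt.hasFDerivAt.comp x hp
  rw [pd, h1.fderiv]
  simp [mul_comm]

theorem stmt16 (n : ℕ) (hn : 0 < n) (w1 : ℝ → ℝ) (hw1 : ContDiff ℝ (⊤ : ℕ∞) w1) (M : ℝ)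
    (hM : ∃ S : ℝ, (∀ t : ℝ, |deriv w1 t| ≤ S) ∧ S < M)
    (w2 : ℝ → ℝ)
    (hw2 : w2 = fun t => ∫ s in (0:ℝ)..t, Real.sqrt (M^2 - (deriv w1 s)^2))
    (v F : (Fin n → ℝ) → ℝ)
    (hv : v = fun x => w1 (x ⟨0, hn⟩))
    (hF : F = fun x => (1/2) * (deriv w2 (x ⟨0, hn⟩))^2) :
    ContDiff ℝ (⊤ : ℕ∞) v ∧ ContDiff ℝ (⊤ : ℕ∞) F ∧
    ∀ x, (∑ i, ∑ j, pd v i x * pd v j x * pd (pd v j) i x)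
      + (∑ i, pd v i x * pd F i x) = 0 := by
  set e : Fin n := ⟨0, hn⟩
  obtain ⟨S, hS, hSM⟩ := hM
  -- derivative facts about w1
  have hder : ∀ f : ℝ → ℝ, ContDiff ℝ (⊤ : ℕ∞) f → ContDiff ℝ (⊤ : ℕ∞) (deriv f) := by
    intro f hf
    have hf' : ContDiff ℝ (((⊤ : ℕ∞) : WithTop ℕ∞) + 1) f := by
      rwa [show (((⊤ : ℕ∞) : WithTop ℕ∞) + 1) = ((⊤ : ℕ∞) : WithTop ℕ∞) by
        rw [← WithTop.coe_one, ← WithTop.coe_add, top_add]]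
    exact (contDiff_succ_iff_deriv.mp hf').2.2
  have hd1' : ContDiff ℝ (⊤ : ℕ∞) (deriv w1) := hder _ hw1
  have hd1 : Differentiable ℝ (deriv w1) ∧ ContDiff ℝ (⊤ : ℕ∞) (deriv (deriv w1)) :=
    ⟨hd1'.differentiable (by simp), hder _ hd1'⟩
  -- positivity
  have hpos : ∀ t, 0 ≤ M^2 - (deriv w1 t)^2 := by
    intro t
    have h1 : |deriv w1 t| ≤ S := hS t
    have h0 : (0:ℝ) ≤ S := le_trans (abs_nonneg _) h1
    have : (deriv w1 t)^2 ≤ M^2 := by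
      have := sq_le_sq' (neg_le_of_abs_le h1 |>.trans' (by linarith)) (le_of_abs_le h1 |>.trans hSM.le)
      nlinarith [sq_abs (deriv w1 t), abs_nonneg (deriv w1 t)]
    linarith
  -- deriv w2
  have hcont : Continuous fun s => Real.sqrt (M^2 - (deriv w1 s)^2) :=
    (continuous_const.sub (hd1'.continuous.pow 2)).sqrt
  have hdw2 : ∀ t, deriv w2 t = Real.sqrt (M^2 - (deriv w1 t)^2) := by
    intro t
    rw [hw2]
    exact Continuous.deriv_integral _ hcont 0 t
  -- F simplified
  have hF' : F = fun x => (1/2) * (M^2 - (deriv w1 (x e))^2) := by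
    rw [hF]; funext x
    rw [hdw2, Real.sq_sqrt (hpos _)]
  have hproj : ContDiff ℝ (⊤ : ℕ∞) (fun x : Fin n → ℝ => x e) :=
    (ContinuousLinearMap.proj e (R := ℝ) (φ := fun _ : Fin n => ℝ)).contDiff
  have hcv : ContDiff ℝ (⊤ : ℕ∞) v := hv ▸ hw1.comp hproj
  have hcF : ContDiff ℝ (⊤ : ℕ∞) F := by
    rw [hF']
    exact contDiff_const.mul (contDiff_const.sub ((hd1'.comp hproj).pow 2))
  refine ⟨hcv, hcF, fun x => ?_⟩
  set d1 := deriv w1 (x e)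
  set d2 := deriv (deriv w1) (x e)
  set c : Fin n → ℝ := fun i => (Pi.single i 1 : Fin n → ℝ) e with hc
  -- pd v
  have hpv : ∀ i y, pd v i y = deriv w1 (y e) * (Pi.single i 1 : Fin n → ℝ) e := by
    intro i y
    rw [hv]
    exact pd_comp_s16 e w1 y (hw1.differentiable (by simp) _) i
  -- pd (pd v j)
  have hppv : ∀ i j, pd (pd v j) i x = (d2 * c j) * c i := by
    intro i j
    have : pd v j = fun y => (fun t => deriv w1 t * c j) (y e) := funext fun y => hpv j y
    rw [this, pd_comp_s16 e _ x ((hd1.1 _).mul_const _) i]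
    congr 1
    rw [deriv_mul_const (hd1.1 _)]
  -- pd F
  have hpF : ∀ i, pd F i x = (-(d1 * d2)) * c i := by
    intro i
    have hdiff : DifferentiableAt ℝ (fun t => (1/2 : ℝ) * (M^2 - (deriv w1 t)^2)) (x e) :=
      (((differentiableAt_const _).sub ((hd1.1 _).pow 2)).const_mul _)
    rw [hF', pd_comp_s16 e (fun t => (1/2 : ℝ) * (M^2 - (deriv w1 t)^2)) x hdiff i]
    congr 1
    have hg : HasDerivAt (fun t => (1/2 : ℝ) * (M^2 - (deriv w1 t)^2))
        ((1/2) * (0 - 2 * deriv w1 (x e) ^ 1 * deriv (deriv w1) (x e))) (x e) := by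
      exact ((hasDerivAt_const _ _).sub (((hd1.1 _).hasDerivAt).pow 2)).const_mul _
    rw [hg.deriv]; ring
  -- final computation
  have hsum : ∀ (a : ℝ), ∑ i, a * c i ^ 2 = a := by
    intro a
    rw [Finset.sum_eq_single e]
    · simp [hc]
    · intro b _ hb
      have : (Pi.single b 1 : Fin n → ℝ) e = 0 := Pi.single_eq_of_ne (Ne.symm hb) 1
      simp [hc, this]
    · simp
  calc (∑ i, ∑ j, pd v i x * pd v j x * pd (pd v j) i x) + (∑ i, pd v i x * pd F i x)
      = (∑ i, (∑ j, (d1^2 * d2 * c j ^2)) * c i ^ 2) + (∑ i, (-(d1^2 * d2)) * c i ^ 2) := by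
        congr 1
        · refine Finset.sum_congr rfl fun i _ => ?_
          rw [Finset.sum_mul]
          refine Finset.sum_congr rfl fun j _ => ?_
          rw [hpv, hpv, hppv]; ring
        · refine Finset.sum_congr rfl fun i _ => ?_
          rw [hpv, hpF]; ring
    _ = 0 := by rw [hsum, hsum, hsum]; ring
end
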